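/- arXiv:2109.09234 — 2 statements merged into one kernel-verified Lean document; each statement's English description precedes it below -/
import Mathlib

section
/- From a Xu predictive family one obtains a multivariable predictive family: Let U be a Xu predictive family over 𝒳 and 𝒴, and define V(U) := ⋃_{f ∈ U} {g_f, g'_f}, where g_f(x) := f(x) and g'_f(x) := f(∅) for all x ∈ 𝒳. Then V(U) is a single-variable multivariable predictive family: for every h ∈ V(U) and every x ∈ 𝒳 there exists h' ∈ V(U) with h'(x') = h(x) for all x' ∈ 𝒳. -/
open MeasureTheory

/-- `-log p`, valued in `[0,∞]` (with `-log 0 = ∞`). -/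
noncomputable def negLog (p : ENNReal) : ENNReal :=
  if p = 0 then ⊤ else ENNReal.ofReal (-Real.log p.toReal)

/-- A Xu predictive family (Xu et al. 2020): a set `U` of functions from
`𝒳 ∪ {∅}` (modeled as `Option 𝒳`, with `none` the null symbol `∅`) to
probability mass functions over `𝒴`, such that for every `f ∈ U` and every
`P` in the range of `f`, there is `f' ∈ U` with `f' x = P` for all `x ∈ 𝒳`
and `f' ∅ = P` (optional ignorance). -/
def IsXuPredictiveFamily {𝒳 𝒴 : Type*} (U : Set (Option 𝒳 → PMF 𝒴)) : Prop :=
  ∀ f ∈ U, ∀ Q ∈ Set.range f, ∃ f' ∈ U,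
    (∀ x : 𝒳, f' (some x) = Q) ∧ f' none = Q

/-- A single-variable multivariable predictive family: for every `h ∈ V` and
every `x ∈ 𝒳` there exists `h' ∈ V` with `h' x' = h x` for all `x' ∈ 𝒳`
(multivariable optional ignorance in the single-variable case). -/
def IsSingleVarPredictiveFamily {𝒳 𝒴 : Type*} (V : Set (𝒳 → PMF 𝒴)) : Prop :=
  ∀ h ∈ V, ∀ x : 𝒳, ∃ h' ∈ V, ∀ x' : 𝒳, h' x' = h x

/-- The Xu-to-multivariable construction `V(U) := ⋃_{f ∈ U} {g_f, g'_f}`,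
where `g_f x := f x` and `g'_f x := f ∅` for all `x ∈ 𝒳`. -/
def VofU {𝒳 𝒴 : Type*} (U : Set (Option 𝒳 → PMF 𝒴)) : Set (𝒳 → PMF 𝒴) :=
  ⋃ f ∈ U, {fun x => f (some x), fun _ => f none}

/-- `g_f`: the extension of `f : 𝒳 → 𝒫(𝒴)` to `𝒳 ∪ {∅}` with `g_f ∅ := f ā`. -/
def gOf {𝒳 𝒴 : Type*} (f : 𝒳 → PMF 𝒴) (a : 𝒳) : Option 𝒳 → PMF 𝒴 :=
  fun o => o.elim (f a) f

/-- The multivariable-to-Xu construction `U(V) := ⋃_{f ∈ V} ({g_f} ∪ G_f)`,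
where `g_f (some x) := f x`, `g_f ∅ := f ā`, and `G_f` is the set of all
constant functions on `𝒳 ∪ {∅}` taking a value `P` in the range of `g_f`. -/
def UofV {𝒳 𝒴 : Type*} (V : Set (𝒳 → PMF 𝒴)) (a : 𝒳) : Set (Option 𝒳 → PMF 𝒴) :=
  ⋃ f ∈ V, ({gOf f a} ∪ {g | ∃ Q ∈ Set.range (gOf f a), g = fun _ => Q})

/-- `H_U(Y|X)` for a set `U` of functions on `𝒳 ∪ {∅}`. -/
noncomputable def xuEntropyCond {Ω 𝒳 𝒴 : Type*} [MeasurableSpace Ω]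
    (P : Measure Ω) (U : Set (Option 𝒳 → PMF 𝒴)) (X : Ω → 𝒳) (Y : Ω → 𝒴) : ENNReal :=
  ⨅ f ∈ U, ∫⁻ ω, negLog (f (some (X ω)) (Y ω)) ∂P

/-- `H_U(Y|∅)` for a set `U` of functions on `𝒳 ∪ {∅}`. -/
noncomputable def xuEntropyNull {Ω 𝒳 𝒴 : Type*} [MeasurableSpace Ω]
    (P : Measure Ω) (U : Set (Option 𝒳 → PMF 𝒴)) (Y : Ω → 𝒴) : ENNReal :=
  ⨅ f ∈ U, ∫⁻ ω, negLog (f none (Y ω)) ∂P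

/-- `H_V(Y|X)` for a set `V` of functions on `𝒳`. -/
noncomputable def svEntropyCond {Ω 𝒳 𝒴 : Type*} [MeasurableSpace Ω]
    (P : Measure Ω) (V : Set (𝒳 → PMF 𝒴)) (X : Ω → 𝒳) (Y : Ω → 𝒴) : ENNReal :=
  ⨅ h ∈ V, ∫⁻ ω, negLog (h (X ω) (Y ω)) ∂P

/-- `H_V(Y)` for a set `V` of functions on `𝒳`, computed with the
informationless constant `a ∈ 𝒳`. -/
noncomputable def svEntropyConst {Ω 𝒳 𝒴 : Type*} [MeasurableSpace Ω]
    (P : Measure Ω) (V : Set (𝒳 → PMF 𝒴)) (a : 𝒳) (Y : Ω → 𝒴) : ENNReal :=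
  ⨅ h ∈ V, ∫⁻ ω, negLog (h a (Y ω)) ∂P

section

variable {𝒳 𝒴 : Type*} {U : Set (Option 𝒳 → PMF 𝒴)}

theorem const_none_mem_VofU {f : Option 𝒳 → PMF 𝒴} (hf : f ∈ U) :
    (fun _ => f none) ∈ VofU U :=
  Set.mem_biUnion hf (Set.mem_insert_of_mem _ rfl)

theorem exists_range_subset_of_mem_VofU {h : 𝒳 → PMF 𝒴} (hh : h ∈ VofU U) :
    ∃ f ∈ U, Set.range h ⊆ Set.range f := by
  obtain ⟨f, hf, hcase⟩ := Set.mem_iUnion₂.mp hh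
  refine ⟨f, hf, ?_⟩
  rcases hcase with rfl | rfl
  · rintro _ ⟨x, rfl⟩
    exact ⟨some x, rfl⟩
  · rintro _ ⟨-, rfl⟩
    exact ⟨none, rfl⟩

end

theorem VofU_isSingleVarPredictiveFamily_general {𝒳 𝒴 : Type*}
    (U : Set (Option 𝒳 → PMF 𝒴)) (hU : IsXuPredictiveFamily U) :
    IsSingleVarPredictiveFamily (VofU U) := by
  intro h hh x
  obtain ⟨f, hf, hrange⟩ := exists_range_subset_of_mem_VofU hh
  obtain ⟨f', hf', -, hnone⟩ := hU f hf (h x) (hrange ⟨x, rfl⟩)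
  exact ⟨fun _ => f' none, const_none_mem_VofU hf', fun _ => hnone⟩

/-- From a Xu predictive family `U` over `𝒳` and `𝒴`, the
construction `V(U)` is a single-variable multivariable predictive family. -/
theorem VofU_isSingleVarPredictiveFamily {𝒳 𝒴 : Type*} [Nonempty 𝒳]
    [Fintype 𝒴] [Nonempty 𝒴]
    (U : Set (Option 𝒳 → PMF 𝒴)) (hU : IsXuPredictiveFamily U) :
    IsSingleVarPredictiveFamily (VofU U) :=
  VofU_isSingleVarPredictiveFamily_general U hU
end

section
/- Conditional entropy is preserved by the multivariable-to-Xu construction: Let V be a single-variable multivariable predictive family over 𝒳 and 𝒴, fix ā ∈ 𝒳, and define U(V) := ⋃_{f ∈ V} ({g_f} ∪ G_f), where g_f(x) := f(x) for x ∈ 𝒳, g_f(∅) := f(ā), and G_f is the set of all constant functions on 𝒳 ∪ {∅} taking a value P in the range of g_f. Then H_{U(V)}(Y|X) = H_V(Y|X), i.e., inf_{g ∈ U(V)} E[−log g(X)(Y)] = inf_{h ∈ V} E[−log h(X)(Y)]. -/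
open MeasureTheory

section Restriction

variable {𝒳 𝒴 : Type*}

theorem xuEntropyCond_eq_svEntropyCond_image {Ω : Type*} [MeasurableSpace Ω]
    (P : Measure Ω) (U : Set (Option 𝒳 → PMF 𝒴)) (X : Ω → 𝒳) (Y : Ω → 𝒴) :
    xuEntropyCond P U X Y =
      svEntropyCond P ((fun g x => g (some x)) '' U) X Y := by
  rw [svEntropyCond, iInf_image, xuEntropyCond]

theorem gOf_comp_some (f : 𝒳 → PMF 𝒴) (a : 𝒳) : (fun x => gOf f a (some x)) = f :=
  rfl

theorem exists_eq_gOf_of_mem_range {f : 𝒳 → PMF 𝒴} {a : 𝒳} {Q : PMF 𝒴}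
    (hQ : Q ∈ Set.range (gOf f a)) : ∃ x, f x = Q := by
  obtain ⟨o, rfl⟩ := hQ
  cases o with
  | none => exact ⟨a, rfl⟩
  | some x => exact ⟨x, rfl⟩

/-- Each `g_f` restricts to `f`, and the constants in `G_f` restrict to constants that are
already in `V` by optional ignorance. -/
theorem image_UofV_comp_some {V : Set (𝒳 → PMF 𝒴)} (hV : IsSingleVarPredictiveFamily V)
    (a : 𝒳) : (fun g x => g (some x)) '' UofV V a = V := by
  apply Set.Subset.antisymm
  · rintro _ ⟨g, hg, rfl⟩
    obtain ⟨f, hf, rfl | ⟨Q, hQ, rfl⟩⟩ := Set.mem_iUnion₂.1 hg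
    · exact hf
    · obtain ⟨x₀, rfl⟩ := exists_eq_gOf_of_mem_range hQ
      obtain ⟨h, hh, hconst⟩ := hV f hf x₀
      simpa only [← funext hconst] using hh
  · intro f hf
    exact ⟨gOf f a, Set.mem_biUnion hf (Or.inl rfl), gOf_comp_some f a⟩

end Restriction

theorem xuEntropyCond_UofV_eq_svEntropyCond_general {Ω 𝒳 𝒴 : Type*}
    [MeasurableSpace Ω]
    (P : Measure Ω)
    (X : Ω → 𝒳) (Y : Ω → 𝒴)
    (V : Set (𝒳 → PMF 𝒴)) (hV : IsSingleVarPredictiveFamily V) (a : 𝒳) :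
    xuEntropyCond P (UofV V a) X Y = svEntropyCond P V X Y := by
  rw [xuEntropyCond_eq_svEntropyCond_image, image_UofV_comp_some hV]

/-- Conditional entropy is preserved by the
multivariable-to-Xu construction: `H_{U(V)}(Y|X) = H_V(Y|X)`. -/
theorem xuEntropyCond_UofV_eq_svEntropyCond {Ω 𝒳 𝒴 : Type*}
    [MeasurableSpace Ω] [MeasurableSpace 𝒳] [Nonempty 𝒳]
    [Fintype 𝒴] [Nonempty 𝒴] [MeasurableSpace 𝒴]
    (P : Measure Ω) [IsProbabilityMeasure P]
    (X : Ω → 𝒳) (Y : Ω → 𝒴) (hX : Measurable X) (hY : Measurable Y)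
    (V : Set (𝒳 → PMF 𝒴)) (hV : IsSingleVarPredictiveFamily V) (a : 𝒳) :
    xuEntropyCond P (UofV V a) X Y = svEntropyCond P V X Y :=
  xuEntropyCond_UofV_eq_svEntropyCond_general P X Y V hV a
end
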